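/- Let n ≥ 1 be an integer and let a, b > 0 be real numbers with a + b = 2n + 2. Let u₀ and v₀ be smooth, compactly supported functions on ℍ^n × [0,∞). Then the function (z,t,ρ) ↦ [ ρ^{a} u₀ · Δ_B(ρ^{b} v₀) − ρ^{b} v₀ · Δ_B(ρ^{a} u₀) ] · ρ^{−2n−3} is integrable on ℍ^n × (0,∞), and ∫_{ℍ^n × (0,∞)} [ ρ^{a} u₀ · Δ_B(ρ^{b} v₀) − ρ^{b} v₀ · Δ_B(ρ^{a} u₀) ] ρ^{−2n−3} \, dz\,dt\,dρ = (a − b) ∫_{ℍ^n} u₀(z,t,0) v₀(z,t,0) \, dz\,dt. -/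

import Mathlib

noncomputable section

open MeasureTheory

/-- The Heisenberg group ℍⁿ, with coordinates (x, y, t). -/
abbrev Heis (n : ℕ) := (Fin n → ℝ) × (Fin n → ℝ) × ℝ

/-- The half-space model ℍⁿ × ℝ (last coordinate ρ). -/
abbrev Dom (n : ℕ) := Heis n × ℝ

/-- Directional derivative of a real-valued function along the constant vector `v`. -/
def pd {E : Type*} [NormedAddCommGroup E] [NormedSpace ℝ E] (v : E) (F : E → ℝ) : E → ℝ :=
  fun p => fderiv ℝ F p v

/-- The x_j direction. -/
def dxv (n : ℕ) (j : Fin n) : Dom n := ((Pi.single j 1, 0, 0), 0)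
/-- The y_j direction. -/
def dyv (n : ℕ) (j : Fin n) : Dom n := ((0, Pi.single j 1, 0), 0)
/-- The t direction. -/
def dtv (n : ℕ) : Dom n := ((0, 0, 1), 0)
/-- The ρ direction. -/
def drv (n : ℕ) : Dom n := ((0, 0, 0), 1)

/-- Heisenberg vector field X_j = ∂_{x_j} + 2 y_j ∂_t. -/
def Xop (n : ℕ) (j : Fin n) (F : Dom n → ℝ) : Dom n → ℝ :=
  fun p => pd (dxv n j) F p + 2 * (p.1.2.1 j) * pd (dtv n) F p

/-- Heisenberg vector field Y_j = ∂_{y_j} − 2 x_j ∂_t. -/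
def Yop (n : ℕ) (j : Fin n) (F : Dom n → ℝ) : Dom n → ℝ :=
  fun p => pd (dyv n j) F p - 2 * (p.1.1 j) * pd (dtv n) F p

/-- The Heisenberg sub-Laplacian Δ_b = (1/2) Σ_j (X_j² + Y_j²). -/
def Δb (n : ℕ) (F : Dom n → ℝ) : Dom n → ℝ :=
  fun p => (1 / 2 : ℝ) * ∑ j : Fin n, (Xop n j (Xop n j F) p + Yop n j (Yop n j F) p)

/-- The complex-hyperbolic Laplace–Beltrami operator
Δ_B = ρ² ∂²_ρ + ρ² Δ_b + ρ⁴ ∂²_t − (2n+1) ρ ∂_ρ. -/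
def ΔB (n : ℕ) (F : Dom n → ℝ) : Dom n → ℝ :=
  fun p => p.2 ^ 2 * pd (drv n) (pd (drv n) F) p + p.2 ^ 2 * Δb n F p
    + p.2 ^ 4 * pd (dtv n) (pd (dtv n) F) p - (2 * n + 1) * p.2 * pd (drv n) F p

/-! ### Auxiliary lemmas -/

section Aux

variable {E : Type*} [NormedAddCommGroup E] [NormedSpace ℝ E]

lemma pd_contDiff {F : E → ℝ} (hF : ContDiff ℝ (⊤ : ℕ∞) F) (v : E) : ContDiff ℝ (⊤ : ℕ∞) (pd v F) := by
  have h1 : ContDiff ℝ (⊤ : ℕ∞) (fderiv ℝ F) := hF.fderiv_right (by simp)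
  exact (ContinuousLinearMap.apply ℝ ℝ v).contDiff.comp h1

lemma pd_support {F : E → ℝ} (hF : HasCompactSupport F) (v : E) :
    HasCompactSupport (pd v F) := hF.fderiv_apply ℝ v

lemma pd_add (v : E) {A B : E → ℝ} {p : E} (hA : DifferentiableAt ℝ A p)
    (hB : DifferentiableAt ℝ B p) :
    pd v (fun q => A q + B q) p = pd v A p + pd v B p := by
  simp [pd, fderiv_fun_add hA hB]

lemma pd_sub (v : E) {A B : E → ℝ} {p : E} (hA : DifferentiableAt ℝ A p)
    (hB : DifferentiableAt ℝ B p) :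
    pd v (fun q => A q - B q) p = pd v A p - pd v B p := by
  simp [pd, fderiv_fun_sub hA hB]

lemma pd_mul (v : E) {A B : E → ℝ} {p : E} (hA : DifferentiableAt ℝ A p)
    (hB : DifferentiableAt ℝ B p) :
    pd v (fun q => A q * B q) p = pd v A p * B p + A p * pd v B p := by
  simp [pd, fderiv_fun_mul hA hB]
  ring

lemma pd_const_mul (v : E) (c : ℝ) {A : E → ℝ} {p : E} (hA : DifferentiableAt ℝ A p) :
    pd v (fun q => c * A q) p = c * pd v A p := by
  simp [pd, fderiv_const_mul hA]

lemma pd_congr_nhds {F G : E → ℝ} {p : E} (h : F =ᶠ[nhds p] G) (v : E) :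
    pd v F p = pd v G p := by
  simp [pd, h.fderiv_eq]

lemma pd_congr_open {U : Set E} (hU : IsOpen U) {F G : E → ℝ} (h : Set.EqOn F G U)
    {p : E} (hp : p ∈ U) (v : E) : pd v F p = pd v G p :=
  pd_congr_nhds (Filter.eventuallyEq_of_mem (hU.mem_nhds hp) h) v

end Aux

variable {n : ℕ}

lemma Xop_congr_open {U : Set (Dom n)} (hU : IsOpen U) {F G : Dom n → ℝ}
    (h : Set.EqOn F G U) {p : Dom n} (hp : p ∈ U) (j : Fin n) :
    Xop n j F p = Xop n j G p := by
  simp only [Xop]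
  rw [pd_congr_open hU h hp, pd_congr_open hU h hp]

lemma Yop_congr_open {U : Set (Dom n)} (hU : IsOpen U) {F G : Dom n → ℝ}
    (h : Set.EqOn F G U) {p : Dom n} (hp : p ∈ U) (j : Fin n) :
    Yop n j F p = Yop n j G p := by
  simp only [Yop]
  rw [pd_congr_open hU h hp, pd_congr_open hU h hp]

lemma Xop_contDiff {F : Dom n → ℝ} (hF : ContDiff ℝ (⊤ : ℕ∞) F) (j : Fin n) :
    ContDiff ℝ (⊤ : ℕ∞) (Xop n j F) := by
  have h1 := pd_contDiff hF (dxv n j)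
  have h2 := pd_contDiff hF (dtv n)
  have h3 : ContDiff ℝ (⊤ : ℕ∞) (fun p : Dom n => p.1.2.1 j) := by fun_prop
  exact h1.add ((contDiff_const.mul h3).mul h2)

lemma Yop_contDiff {F : Dom n → ℝ} (hF : ContDiff ℝ (⊤ : ℕ∞) F) (j : Fin n) :
    ContDiff ℝ (⊤ : ℕ∞) (Yop n j F) := by
  have h1 := pd_contDiff hF (dyv n j)
  have h2 := pd_contDiff hF (dtv n)
  have h3 : ContDiff ℝ (⊤ : ℕ∞) (fun p : Dom n => p.1.1 j) := by fun_prop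
  exact h1.sub ((contDiff_const.mul h3).mul h2)

lemma Xop_support {F : Dom n → ℝ} (hF : HasCompactSupport F) (j : Fin n) :
    HasCompactSupport (Xop n j F) :=
  (pd_support hF (dxv n j)).add (HasCompactSupport.mul_left (pd_support hF (dtv n)))

lemma hcs_sub {α : Type*} [TopologicalSpace α] {f g : α → ℝ} (hf : HasCompactSupport f)
    (hg : HasCompactSupport g) : HasCompactSupport (fun x => f x - g x) := by
  exact hf.sub hg

lemma Yop_support {F : Dom n → ℝ} (hF : HasCompactSupport F) (j : Fin n) :
    HasCompactSupport (Yop n j F) :=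
  hcs_sub (pd_support hF (dyv n j)) (HasCompactSupport.mul_left (pd_support hF (dtv n)))

/-! ### rpow product rules -/

lemma rpow_hasFDerivAt (s : ℝ) {p : Dom n} (hp : p.2 ≠ 0) :
    HasFDerivAt (fun q : Dom n => q.2 ^ s)
      ((s * p.2 ^ (s - 1)) • (ContinuousLinearMap.snd ℝ (Heis n) ℝ)) p :=
  (Real.hasDerivAt_rpow_const (p := s) (Or.inl hp)).comp_hasFDerivAt p (hasFDerivAt_snd)

lemma rpow_diffAt (s : ℝ) {p : Dom n} (hp : p.2 ≠ 0) :
    DifferentiableAt ℝ (fun q : Dom n => q.2 ^ s) p := (rpow_hasFDerivAt s hp).differentiableAt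

lemma pd_rpow_mul (s : ℝ) {F : Dom n → ℝ} {p : Dom n} (hp : p.2 ≠ 0)
    (hF : DifferentiableAt ℝ F p) (w : Dom n) :
    pd w (fun q : Dom n => q.2 ^ s * F q) p
      = s * p.2 ^ (s - 1) * w.2 * F p + p.2 ^ s * pd w F p := by
  have h := ((rpow_hasFDerivAt s hp).fun_mul hF.hasFDerivAt).fderiv
  simp only [pd, h]
  simp [ContinuousLinearMap.smul_apply, ContinuousLinearMap.snd]
  ring

lemma pd0_rpow_mul (s : ℝ) {F : Dom n → ℝ} {p : Dom n} (hp : p.2 ≠ 0)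
    (hF : DifferentiableAt ℝ F p) {w : Dom n} (hw : w.2 = 0) :
    pd w (fun q : Dom n => q.2 ^ s * F q) p = p.2 ^ s * pd w F p := by
  rw [pd_rpow_mul s hp hF w, hw]
  ring

lemma Xop_rpow_mul (s : ℝ) (j : Fin n) {F : Dom n → ℝ} {p : Dom n} (hp : p.2 ≠ 0)
    (hF : Differentiable ℝ F) :
    Xop n j (fun q : Dom n => q.2 ^ s * F q) p = p.2 ^ s * Xop n j F p := by
  simp only [Xop]
  rw [pd0_rpow_mul s hp (hF p) (by simp [dxv]), pd0_rpow_mul s hp (hF p) (by simp [dtv])]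
  ring

lemma Yop_rpow_mul (s : ℝ) (j : Fin n) {F : Dom n → ℝ} {p : Dom n} (hp : p.2 ≠ 0)
    (hF : Differentiable ℝ F) :
    Yop n j (fun q : Dom n => q.2 ^ s * F q) p = p.2 ^ s * Yop n j F p := by
  simp only [Yop]
  rw [pd0_rpow_mul s hp (hF p) (by simp [dyv]), pd0_rpow_mul s hp (hF p) (by simp [dtv])]
  ring

/-- How `ΔB` acts on `ρ^s · F`. -/
lemma DeltaB_rpow_mul (s : ℝ) {F : Dom n → ℝ} (hF : ContDiff ℝ (⊤ : ℕ∞) F) {p : Dom n}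
    (hp : 0 < p.2) :
    ΔB n (fun q : Dom n => q.2 ^ s * F q) p
      = p.2 ^ s * (ΔB n F p + s * (s - (2 * (n : ℝ) + 2)) * F p
          + 2 * s * p.2 * pd (drv n) F p) := by
  have hne : p.2 ≠ 0 := ne_of_gt hp
  have hdF : Differentiable ℝ F := hF.differentiable (by simp)
  have hdF' : Differentiable ℝ (pd (drv n) F) := (pd_contDiff hF (drv n)).differentiable (by simp)
  have hdFt : Differentiable ℝ (pd (dtv n) F) := (pd_contDiff hF (dtv n)).differentiable (by simp)
  set U : Set (Dom n) := {q | 0 < q.2} with hUdef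
  have hU : IsOpen U := isOpen_lt continuous_const continuous_snd
  have hpU : p ∈ U := hp
  set g : Dom n → ℝ := fun q => q.2 ^ s * F q with hg
  -- second derivative in ρ
  have hrg : Set.EqOn (pd (drv n) g)
      (fun q => s * (q.2 ^ (s - 1) * F q) + q.2 ^ s * pd (drv n) F q) U := by
    intro q hq
    rw [pd_rpow_mul s (ne_of_gt hq) (hdF q) (drv n)]
    simp [drv]
    ring
  have hrr : pd (drv n) (pd (drv n) g) p
      = s * ((s - 1) * p.2 ^ (s - 1 - 1) * F p + p.2 ^ (s - 1) * pd (drv n) F p)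
        + (s * p.2 ^ (s - 1) * pd (drv n) F p + p.2 ^ s * pd (drv n) (pd (drv n) F) p) := by
    rw [pd_congr_open hU hrg hpU (drv n)]
    rw [pd_add (drv n) (((rpow_diffAt (s - 1) hne).fun_mul (hdF p)).const_mul s)
      ((rpow_diffAt s hne).fun_mul (hdF' p))]
    rw [pd_const_mul (drv n) s ((rpow_diffAt (s - 1) hne).fun_mul (hdF p))]
    rw [pd_rpow_mul (s - 1) hne (hdF p) (drv n), pd_rpow_mul s hne (hdF' p) (drv n)]
    simp [drv]
  -- second derivative in t
  have htg : Set.EqOn (pd (dtv n) g) (fun q => q.2 ^ s * pd (dtv n) F q) U := by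
    intro q hq
    exact pd0_rpow_mul s (ne_of_gt hq) (hdF q) (by simp [dtv])
  have htt : pd (dtv n) (pd (dtv n) g) p = p.2 ^ s * pd (dtv n) (pd (dtv n) F) p := by
    rw [pd_congr_open hU htg hpU (dtv n)]
    exact pd0_rpow_mul s hne (hdFt p) (by simp [dtv])
  -- first derivative in ρ
  have hr1 : pd (drv n) g p = s * p.2 ^ (s - 1) * F p + p.2 ^ s * pd (drv n) F p := by
    rw [pd_rpow_mul s hne (hdF p) (drv n)]
    simp [drv]
  -- Δb part
  have hXX : ∀ j : Fin n, Xop n j (Xop n j g) p = p.2 ^ s * Xop n j (Xop n j F) p := by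
    intro j
    have hXg : Set.EqOn (Xop n j g) (fun q => q.2 ^ s * Xop n j F q) U := fun q hq =>
      Xop_rpow_mul s j (ne_of_gt hq) hdF
    rw [Xop_congr_open hU hXg hpU j]
    exact Xop_rpow_mul s j hne ((Xop_contDiff hF j).differentiable (by simp))
  have hYY : ∀ j : Fin n, Yop n j (Yop n j g) p = p.2 ^ s * Yop n j (Yop n j F) p := by
    intro j
    have hYg : Set.EqOn (Yop n j g) (fun q => q.2 ^ s * Yop n j F q) U := fun q hq =>
      Yop_rpow_mul s j (ne_of_gt hq) hdF
    rw [Yop_congr_open hU hYg hpU j]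
    exact Yop_rpow_mul s j hne ((Yop_contDiff hF j).differentiable (by simp))
  have hΔb : Δb n g p = p.2 ^ s * Δb n F p := by
    have hsum : ∑ j : Fin n, (Xop n j (Xop n j g) p + Yop n j (Yop n j g) p)
        = p.2 ^ s * ∑ j : Fin n, (Xop n j (Xop n j F) p + Yop n j (Yop n j F) p) := by
      rw [Finset.mul_sum]
      exact Finset.sum_congr rfl fun j _ => by rw [hXX j, hYY j]; ring
    simp only [Δb]
    rw [hsum]
    ring
  -- assemble
  simp only [ΔB]
  rw [hrr, htt, hr1, hΔb]
  have e2 : p.2 ^ s = p.2 ^ (s - 2) * p.2 ^ (2 : ℕ) := by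
    rw [← Real.rpow_natCast p.2 2, ← Real.rpow_add hp]
    norm_num
  have e1 : p.2 ^ (s - 1) = p.2 ^ (s - 2) * p.2 := by
    rw [show s - 1 = (s - 2) + 1 by ring, Real.rpow_add hp, Real.rpow_one]
  have e0 : p.2 ^ (s - 1 - 1) = p.2 ^ (s - 2) := by rw [show s - 1 - 1 = s - 2 by ring]
  rw [e0, e1, e2]
  ring

/-! ### Derivation rules for the Heisenberg fields -/

lemma Xop_sub (j : Fin n) {A B : Dom n → ℝ} {p : Dom n} (hA : DifferentiableAt ℝ A p)
    (hB : DifferentiableAt ℝ B p) :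
    Xop n j (fun q => A q - B q) p = Xop n j A p - Xop n j B p := by
  simp only [Xop]
  rw [pd_sub _ hA hB, pd_sub _ hA hB]
  ring

lemma Xop_mul (j : Fin n) {A B : Dom n → ℝ} {p : Dom n} (hA : DifferentiableAt ℝ A p)
    (hB : DifferentiableAt ℝ B p) :
    Xop n j (fun q => A q * B q) p = Xop n j A p * B p + A p * Xop n j B p := by
  simp only [Xop]
  rw [pd_mul _ hA hB, pd_mul _ hA hB]
  ring

lemma Yop_sub (j : Fin n) {A B : Dom n → ℝ} {p : Dom n} (hA : DifferentiableAt ℝ A p)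
    (hB : DifferentiableAt ℝ B p) :
    Yop n j (fun q => A q - B q) p = Yop n j A p - Yop n j B p := by
  simp only [Yop]
  rw [pd_sub _ hA hB, pd_sub _ hA hB]
  ring

lemma Yop_mul (j : Fin n) {A B : Dom n → ℝ} {p : Dom n} (hA : DifferentiableAt ℝ A p)
    (hB : DifferentiableAt ℝ B p) :
    Yop n j (fun q => A q * B q) p = Yop n j A p * B p + A p * Yop n j B p := by
  simp only [Yop]
  rw [pd_mul _ hA hB, pd_mul _ hA hB]
  ring

lemma Xop_wronskian (j : Fin n) {A B : Dom n → ℝ} (hA : ContDiff ℝ (⊤ : ℕ∞) A)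
    (hB : ContDiff ℝ (⊤ : ℕ∞) B) (p : Dom n) :
    Xop n j (fun q => A q * Xop n j B q - B q * Xop n j A q) p
      = A p * Xop n j (Xop n j B) p - B p * Xop n j (Xop n j A) p := by
  have dA := hA.differentiable (by simp)
  have dB := hB.differentiable (by simp)
  have dXA := (Xop_contDiff hA j).differentiable (by simp)
  have dXB := (Xop_contDiff hB j).differentiable (by simp)
  rw [Xop_sub j ((dA p).fun_mul (dXB p)) ((dB p).fun_mul (dXA p)),
    Xop_mul j (dA p) (dXB p), Xop_mul j (dB p) (dXA p)]
  ring

lemma Yop_wronskian (j : Fin n) {A B : Dom n → ℝ} (hA : ContDiff ℝ (⊤ : ℕ∞) A)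
    (hB : ContDiff ℝ (⊤ : ℕ∞) B) (p : Dom n) :
    Yop n j (fun q => A q * Yop n j B q - B q * Yop n j A q) p
      = A p * Yop n j (Yop n j B) p - B p * Yop n j (Yop n j A) p := by
  have dA := hA.differentiable (by simp)
  have dB := hB.differentiable (by simp)
  have dYA := (Yop_contDiff hA j).differentiable (by simp)
  have dYB := (Yop_contDiff hB j).differentiable (by simp)
  rw [Yop_sub j ((dA p).fun_mul (dYB p)) ((dB p).fun_mul (dYA p)),
    Yop_mul j (dA p) (dYB p), Yop_mul j (dB p) (dYA p)]
  ring

lemma pd_snd (w : Dom n) (p : Dom n) : pd w (fun q : Dom n => q.2) p = w.2 := by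
  have h : HasFDerivAt (fun q : Dom n => q.2) (ContinuousLinearMap.snd ℝ (Heis n) ℝ) p :=
    hasFDerivAt_snd
  simp [pd, h.fderiv]

/-! ### The divergence-form functions -/

/-- First-order Wronskian in the X_j direction. -/
def Wx (n : ℕ) (j : Fin n) (u v : Dom n → ℝ) : Dom n → ℝ :=
  fun q => u q * Xop n j v q - v q * Xop n j u q

/-- First-order Wronskian in the Y_j direction. -/
def Wy (n : ℕ) (j : Fin n) (u v : Dom n → ℝ) : Dom n → ℝ :=
  fun q => u q * Yop n j v q - v q * Yop n j u q

/-- First-order Wronskian in the t direction. -/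
def Wt (n : ℕ) (u v : Dom n → ℝ) : Dom n → ℝ :=
  fun q => u q * pd (dtv n) v q - v q * pd (dtv n) u q

/-- The ρ-flux function. -/
def Phi (n : ℕ) (c : ℝ) (u v : Dom n → ℝ) : Dom n → ℝ :=
  fun q => q.2 * (u q * pd (drv n) v q - v q * pd (drv n) u q) + c * (u q * v q)

/-- The horizontal divergence part. -/
def G2 (n : ℕ) (u v : Dom n → ℝ) : Dom n → ℝ :=
  fun p => (p.2 / 2) * (∑ j : Fin n, (Xop n j (Wx n j u v) p + Yop n j (Wy n j u v) p))
    + p.2 ^ 3 * pd (dtv n) (Wt n u v) p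

/-- The key pointwise divergence identity. -/
lemma key_pointwise (a b : ℝ) (hab : a + b = 2 * (n : ℝ) + 2)
    {u v : Dom n → ℝ} (hu : ContDiff ℝ (⊤ : ℕ∞) u) (hv : ContDiff ℝ (⊤ : ℕ∞) v)
    {p : Dom n} (hp : 0 < p.2) :
    ((p.2 ^ a : ℝ) * u p * ΔB n (fun q => (q.2 ^ b : ℝ) * v q) p
      - (p.2 ^ b : ℝ) * v p * ΔB n (fun q => (q.2 ^ a : ℝ) * u q) p) *
      p.2 ^ (-2 * (n : ℝ) - 3)
    = pd (drv n) (Phi n (b - a) u v) p + G2 n u v p := by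
  obtain rfl : b = 2 * (n : ℝ) + 2 - a := by linarith
  have hne : p.2 ≠ 0 := ne_of_gt hp
  have du := hu.differentiable (by simp)
  have dv := hv.differentiable (by simp)
  have dur : Differentiable ℝ (pd (drv n) u) := (pd_contDiff hu (drv n)).differentiable (by simp)
  have dvr : Differentiable ℝ (pd (drv n) v) := (pd_contDiff hv (drv n)).differentiable (by simp)
  have dut : Differentiable ℝ (pd (dtv n) u) := (pd_contDiff hu (dtv n)).differentiable (by simp)
  have dvt : Differentiable ℝ (pd (dtv n) v) := (pd_contDiff hv (dtv n)).differentiable (by simp)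
  -- expand the flux derivative
  have hPhi : pd (drv n) (Phi n (2 * (n : ℝ) + 2 - a - a) u v) p
      = (u p * pd (drv n) v p - v p * pd (drv n) u p)
        + p.2 * (pd (drv n) u p * pd (drv n) v p + u p * pd (drv n) (pd (drv n) v) p
            - (pd (drv n) v p * pd (drv n) u p + v p * pd (drv n) (pd (drv n) u) p))
        + (2 * (n : ℝ) + 2 - a - a) * (pd (drv n) u p * v p + u p * pd (drv n) v p) := by
    delta Phi
    rw [pd_add (drv n) (by fun_prop) (by fun_prop)]
    rw [pd_mul (drv n) (by fun_prop) (by fun_prop)]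
    rw [pd_const_mul (drv n) _ (by fun_prop)]
    rw [pd_mul (drv n) (du p) (dv p)]
    rw [pd_sub (drv n) (by fun_prop) (by fun_prop)]
    rw [pd_mul (drv n) (du p) (dvr p), pd_mul (drv n) (dv p) (dur p)]
    rw [pd_snd]
    simp [drv]
  -- expand the horizontal part
  have hsum : ∑ j : Fin n, (Xop n j (Wx n j u v) p + Yop n j (Wy n j u v) p)
      = 2 * (u p * Δb n v p - v p * Δb n u p) := by
    have h1 : ∑ j : Fin n, (Xop n j (Wx n j u v) p + Yop n j (Wy n j u v) p)
        = ∑ j : Fin n,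
            (u p * (Xop n j (Xop n j v) p + Yop n j (Yop n j v) p)
              - v p * (Xop n j (Xop n j u) p + Yop n j (Yop n j u) p)) := by
      refine Finset.sum_congr rfl fun j _ => ?_
      delta Wx Wy
      rw [Xop_wronskian j hu hv p, Yop_wronskian j hu hv p]
      ring
    rw [h1, Finset.sum_sub_distrib, ← Finset.mul_sum, ← Finset.mul_sum]
    simp only [Δb]
    ring
  -- expand the t part
  have ht : pd (dtv n) (Wt n u v) p
      = u p * pd (dtv n) (pd (dtv n) v) p - v p * pd (dtv n) (pd (dtv n) u) p := by
    delta Wt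
    rw [pd_sub (dtv n) (by fun_prop) (by fun_prop),
      pd_mul (dtv n) (du p) (dvt p), pd_mul (dtv n) (dv p) (dut p)]
    ring
  rw [DeltaB_rpow_mul (2 * (n : ℝ) + 2 - a) hv hp, DeltaB_rpow_mul a hu hp]
  simp only [G2]
  rw [hPhi, hsum, ht]
  simp only [ΔB]
  -- now pure algebra with rpow bookkeeping
  have hBpow : p.2 ^ (2 * (n : ℝ) + 2 - a) = p.2 ^ (2 * n + 2 : ℕ) / p.2 ^ a := by
    rw [Real.rpow_sub hp]
    congr 1
    rw [← Real.rpow_natCast p.2 (2 * n + 2)]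
    congr 1
    push_cast
    ring
  have hCpow : p.2 ^ (-2 * (n : ℝ) - 3) = (p.2 ^ (2 * n + 3 : ℕ))⁻¹ := by
    rw [← Real.rpow_natCast p.2 (2 * n + 3), ← Real.rpow_neg hp.le]
    congr 1
    push_cast
    ring
  have hApos : (0 : ℝ) < p.2 ^ a := Real.rpow_pos_of_pos hp a
  rw [hBpow, hCpow]
  have hpow23 : p.2 ^ (2 * n + 3 : ℕ) ≠ 0 := pow_ne_zero _ hne
  field_simp
  ring

/-! ### Slices -/

lemma hcs_zero {α : Type*} [TopologicalSpace α] : HasCompactSupport (fun _ : α => (0 : ℝ)) := by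
  rw [hasCompactSupport_def]
  simp

lemma hcs_finsetSum {ι α : Type*} [TopologicalSpace α] (s : Finset ι) (f : ι → α → ℝ)
    (h : ∀ i ∈ s, HasCompactSupport (f i)) :
    HasCompactSupport (fun x => ∑ i ∈ s, f i x) := by
  classical
  induction s using Finset.induction_on with
  | empty => simpa using hcs_zero
  | insert _ _ hnm ih =>
      rename_i a s'
      simp only [Finset.sum_insert hnm]
      exact (h a (Finset.mem_insert_self a s')).add
        (ih fun i hi => h i (Finset.mem_insert_of_mem hi))

lemma slice_fst_support {F : Dom n → ℝ} (hF : HasCompactSupport F) (r : ℝ) :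
    HasCompactSupport (fun w : Heis n => F (w, r)) := by
  apply HasCompactSupport.intro (hF.image continuous_fst)
  intro w hw
  by_contra hfx
  exact hw ⟨(w, r), subset_tsupport F hfx, rfl⟩

lemma slice_snd_support {F : Dom n → ℝ} (hF : HasCompactSupport F) (w : Heis n) :
    HasCompactSupport (fun r : ℝ => F (w, r)) := by
  apply HasCompactSupport.intro (hF.image continuous_snd)
  intro r hr
  by_contra hfx
  exact hr ⟨(w, r), subset_tsupport F hfx, rfl⟩

lemma slice_integrable {F : Dom n → ℝ} (hFc : Continuous F) (hF : HasCompactSupport F) (r : ℝ) :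
    Integrable (fun w : Heis n => F (w, r)) := by
  refine Continuous.integrable_of_hasCompactSupport (by fun_prop) (slice_fst_support hF r)

lemma pd_fst_slice {F : Dom n → ℝ} (hF : Differentiable ℝ F) (vv : Heis n) (w : Heis n) (r : ℝ) :
    pd ((vv, 0) : Dom n) F (w, r) = fderiv ℝ (fun z : Heis n => F (z, r)) w vv := by
  have h : HasFDerivAt (fun z : Heis n => F (z, r))
      ((fderiv ℝ F (w, r)).comp (ContinuousLinearMap.inl ℝ (Heis n) ℝ)) w :=
    (hF (w, r)).hasFDerivAt.comp w (hasFDerivAt_prodMk_left w r)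
  rw [h.fderiv]
  simp [pd]

lemma hasDerivAt_slice_snd {F : Dom n → ℝ} (hF : Differentiable ℝ F) (w : Heis n) (r : ℝ) :
    HasDerivAt (fun ρ : ℝ => F (w, ρ)) (pd (drv n) F (w, r)) r := by
  have h : HasFDerivAt (fun ρ : ℝ => F (w, ρ))
      ((fderiv ℝ F (w, r)).comp (ContinuousLinearMap.inr ℝ (Heis n) ℝ)) r :=
    (hF (w, r)).hasFDerivAt.comp r (hasFDerivAt_prodMk_right w r)
  have h2 := h.hasDerivAt
  convert h2 using 1
  rfl

instance isAddHaar_heis2 {n : ℕ} : ((volume : Measure ((Fin n → ℝ) × ℝ))).IsAddHaarMeasure :=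
  Measure.prod.instIsAddHaarMeasure _ _

instance isAddHaar_heis {n : ℕ} : ((volume : Measure (Heis n))).IsAddHaarMeasure :=
  Measure.prod.instIsAddHaarMeasure _ _

instance isAddHaar_dom {n : ℕ} : ((volume : Measure (Dom n))).IsAddHaarMeasure :=
  Measure.prod.instIsAddHaarMeasure _ _

lemma integral_fderiv_heis_zero {f : Heis n → ℝ} (hf : ContDiff ℝ (⊤ : ℕ∞) f)
    (hcf : HasCompactSupport f) (vv : Heis n) :
    ∫ w : Heis n, fderiv ℝ f w vv = 0 := by
  have hint1 : Integrable (fun x : Heis n => fderiv ℝ f x vv * 1) := by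
    simp only [mul_one]
    exact ((pd_contDiff hf vv).continuous).integrable_of_hasCompactSupport
      (pd_support hcf vv)
  have hint2 : Integrable (fun x : Heis n => f x * fderiv ℝ (fun _ : Heis n => (1:ℝ)) x vv) := by
    have e : (fun x : Heis n => f x * fderiv ℝ (fun _ : Heis n => (1:ℝ)) x vv)
        = fun _ => 0 := by
      ext x
      simp
    rw [e]
    exact integrable_zero _ _ _
  have hint3 : Integrable (fun x : Heis n => f x * 1) := by
    simpa using hf.continuous.integrable_of_hasCompactSupport hcf
  have h := integral_mul_fderiv_eq_neg_fderiv_mul_of_integrable (μ := (volume : Measure (Heis n)))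
    (f := f) (g := fun _ : Heis n => (1:ℝ)) (v := vv) hint1 hint2 hint3
    (fun x _ => hf.differentiable (by simp) x) (fun x _ => differentiableAt_const _)
  have h2 : (0 : ℝ) = - ∫ w : Heis n, fderiv ℝ f w vv := by simpa using h
  linarith

lemma integral_pd0_slice_zero {A : Dom n → ℝ} (hA : ContDiff ℝ (⊤ : ℕ∞) A) (hcA : HasCompactSupport A)
    (vv : Heis n) (r : ℝ) : ∫ w : Heis n, pd ((vv, 0) : Dom n) A (w, r) = 0 := by
  have e : (fun w : Heis n => pd ((vv, 0) : Dom n) A (w, r))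
      = fun w => fderiv ℝ (fun z : Heis n => A (z, r)) w vv :=
    funext fun w => pd_fst_slice (hA.differentiable (by simp)) vv w r
  rw [e]
  exact integral_fderiv_heis_zero (hA.comp (by fun_prop)) (slice_fst_support hcA r) vv

lemma pd_coord_y (j : Fin n) (w p : Dom n) :
    pd w (fun q : Dom n => q.1.2.1 j) p = w.1.2.1 j := by
  set C : Dom n →L[ℝ] ℝ :=
    (ContinuousLinearMap.proj j).comp
      ((ContinuousLinearMap.fst ℝ (Fin n → ℝ) ℝ).comp
        ((ContinuousLinearMap.snd ℝ (Fin n → ℝ) ((Fin n → ℝ) × ℝ)).comp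
          (ContinuousLinearMap.fst ℝ (Heis n) ℝ))) with hC
  have h : HasFDerivAt (fun q : Dom n => q.1.2.1 j) C p := C.hasFDerivAt
  simp only [pd, h.fderiv]
  simp [hC]

lemma pd_coord_x (j : Fin n) (w p : Dom n) :
    pd w (fun q : Dom n => q.1.1 j) p = w.1.1 j := by
  set C : Dom n →L[ℝ] ℝ :=
    (ContinuousLinearMap.proj j).comp
      ((ContinuousLinearMap.fst ℝ (Fin n → ℝ) ((Fin n → ℝ) × ℝ)).comp
        (ContinuousLinearMap.fst ℝ (Heis n) ℝ)) with hC
  have h : HasFDerivAt (fun q : Dom n => q.1.1 j) C p := C.hasFDerivAt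
  simp only [pd, h.fderiv]
  simp [hC]

lemma integral_Xop_slice_zero (j : Fin n) {A : Dom n → ℝ} (hA : ContDiff ℝ (⊤ : ℕ∞) A)
    (hcA : HasCompactSupport A) (r : ℝ) : ∫ w : Heis n, Xop n j A (w, r) = 0 := by
  set B : Dom n → ℝ := fun q => (2 * q.1.2.1 j) * A q with hBdef
  have hBc : ContDiff ℝ (⊤ : ℕ∞) B := by
    have h3 : ContDiff ℝ (⊤ : ℕ∞) (fun p : Dom n => p.1.2.1 j) := by fun_prop
    exact (contDiff_const.mul h3).mul hA
  have hBs : HasCompactSupport B := HasCompactSupport.mul_left hcA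
  have dA : Differentiable ℝ A := hA.differentiable (by simp)
  have key : ∀ w : Heis n, Xop n j A (w, r)
      = pd (dxv n j) A (w, r) + pd (dtv n) B (w, r) := by
    intro w
    have hc : DifferentiableAt ℝ (fun q : Dom n => 2 * q.1.2.1 j) (w, r) := by fun_prop
    have e : pd (dtv n) B (w, r)
        = pd (dtv n) (fun q : Dom n => 2 * q.1.2.1 j) (w, r) * A (w, r)
          + (2 * (w, r).1.2.1 j) * pd (dtv n) A (w, r) := pd_mul (dtv n) hc (dA (w, r))
    have e2 : pd (dtv n) (fun q : Dom n => 2 * q.1.2.1 j) (w, r) = 0 := by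
      rw [pd_const_mul (dtv n) 2 (by fun_prop), pd_coord_y j (dtv n) (w, r)]
      simp [dtv]
    rw [e, e2] at *
    simp only [Xop]
    ring
  have hi1 : Integrable (fun w : Heis n => pd (dxv n j) A (w, r)) :=
    slice_integrable (pd_contDiff hA _).continuous (pd_support hcA _) r
  have hi2 : Integrable (fun w : Heis n => pd (dtv n) B (w, r)) :=
    slice_integrable (pd_contDiff hBc _).continuous (pd_support hBs _) r
  calc ∫ w : Heis n, Xop n j A (w, r)
      = ∫ w : Heis n, (pd (dxv n j) A (w, r) + pd (dtv n) B (w, r)) :=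
        integral_congr_ae (Filter.Eventually.of_forall key)
    _ = (∫ w : Heis n, pd (dxv n j) A (w, r)) + ∫ w : Heis n, pd (dtv n) B (w, r) :=
        integral_add hi1 hi2
    _ = 0 := by
        rw [show (dxv n j) = (((Pi.single j 1, 0, 0) : Heis n), (0 : ℝ)) from rfl,
          show (dtv n) = (((0, 0, 1) : Heis n), (0 : ℝ)) from rfl,
          integral_pd0_slice_zero hA hcA (Pi.single j 1, 0, 0) r,
          integral_pd0_slice_zero hBc hBs (0, 0, 1) r]
        norm_num

lemma integral_Yop_slice_zero (j : Fin n) {A : Dom n → ℝ} (hA : ContDiff ℝ (⊤ : ℕ∞) A)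
    (hcA : HasCompactSupport A) (r : ℝ) : ∫ w : Heis n, Yop n j A (w, r) = 0 := by
  set B : Dom n → ℝ := fun q => (2 * q.1.1 j) * A q with hBdef
  have hBc : ContDiff ℝ (⊤ : ℕ∞) B := by
    have h3 : ContDiff ℝ (⊤ : ℕ∞) (fun p : Dom n => p.1.1 j) := by fun_prop
    exact (contDiff_const.mul h3).mul hA
  have hBs : HasCompactSupport B := HasCompactSupport.mul_left hcA
  have dA : Differentiable ℝ A := hA.differentiable (by simp)
  have key : ∀ w : Heis n, Yop n j A (w, r)
      = pd (dyv n j) A (w, r) - pd (dtv n) B (w, r) := by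
    intro w
    have hc : DifferentiableAt ℝ (fun q : Dom n => 2 * q.1.1 j) (w, r) := by fun_prop
    have e : pd (dtv n) B (w, r)
        = pd (dtv n) (fun q : Dom n => 2 * q.1.1 j) (w, r) * A (w, r)
          + (2 * (w, r).1.1 j) * pd (dtv n) A (w, r) := pd_mul (dtv n) hc (dA (w, r))
    have e2 : pd (dtv n) (fun q : Dom n => 2 * q.1.1 j) (w, r) = 0 := by
      rw [pd_const_mul (dtv n) 2 (by fun_prop), pd_coord_x j (dtv n) (w, r)]
      simp [dtv]
    rw [e, e2] at *
    simp only [Yop]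
    ring
  have hi1 : Integrable (fun w : Heis n => pd (dyv n j) A (w, r)) :=
    slice_integrable (pd_contDiff hA _).continuous (pd_support hcA _) r
  have hi2 : Integrable (fun w : Heis n => pd (dtv n) B (w, r)) :=
    slice_integrable (pd_contDiff hBc _).continuous (pd_support hBs _) r
  calc ∫ w : Heis n, Yop n j A (w, r)
      = ∫ w : Heis n, (pd (dyv n j) A (w, r) - pd (dtv n) B (w, r)) :=
        integral_congr_ae (Filter.Eventually.of_forall key)
    _ = (∫ w : Heis n, pd (dyv n j) A (w, r)) - ∫ w : Heis n, pd (dtv n) B (w, r) :=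
        integral_sub hi1 hi2
    _ = 0 := by
        rw [show (dyv n j) = (((0, Pi.single j 1, 0) : Heis n), (0 : ℝ)) from rfl,
          show (dtv n) = (((0, 0, 1) : Heis n), (0 : ℝ)) from rfl,
          integral_pd0_slice_zero hA hcA (0, Pi.single j 1, 0) r,
          integral_pd0_slice_zero hBc hBs (0, 0, 1) r]
        norm_num

/-! ### Regularity of the divergence-form functions -/

variable {u v : Dom n → ℝ}

lemma Wx_contDiff (j : Fin n) (hu : ContDiff ℝ (⊤ : ℕ∞) u) (hv : ContDiff ℝ (⊤ : ℕ∞) v) :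
    ContDiff ℝ (⊤ : ℕ∞) (Wx n j u v) := by
  delta Wx
  exact (hu.mul (Xop_contDiff hv j)).sub (hv.mul (Xop_contDiff hu j))

lemma Wy_contDiff (j : Fin n) (hu : ContDiff ℝ (⊤ : ℕ∞) u) (hv : ContDiff ℝ (⊤ : ℕ∞) v) :
    ContDiff ℝ (⊤ : ℕ∞) (Wy n j u v) := by
  delta Wy
  exact (hu.mul (Yop_contDiff hv j)).sub (hv.mul (Yop_contDiff hu j))

lemma Wt_contDiff (hu : ContDiff ℝ (⊤ : ℕ∞) u) (hv : ContDiff ℝ (⊤ : ℕ∞) v) :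
    ContDiff ℝ (⊤ : ℕ∞) (Wt n u v) := by
  delta Wt
  exact (hu.mul (pd_contDiff hv (dtv n))).sub (hv.mul (pd_contDiff hu (dtv n)))

lemma Wx_support (j : Fin n) (hcu : HasCompactSupport u) (hcv : HasCompactSupport v) :
    HasCompactSupport (Wx n j u v) := by
  delta Wx
  exact hcs_sub hcu.mul_right hcv.mul_right

lemma Wy_support (j : Fin n) (hcu : HasCompactSupport u) (hcv : HasCompactSupport v) :
    HasCompactSupport (Wy n j u v) := by
  delta Wy
  exact hcs_sub hcu.mul_right hcv.mul_right

lemma Wt_support (hcu : HasCompactSupport u) (hcv : HasCompactSupport v) :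
    HasCompactSupport (Wt n u v) := by
  delta Wt
  exact hcs_sub hcu.mul_right hcv.mul_right

lemma Phi_contDiff (c : ℝ) (hu : ContDiff ℝ (⊤ : ℕ∞) u) (hv : ContDiff ℝ (⊤ : ℕ∞) v) :
    ContDiff ℝ (⊤ : ℕ∞) (Phi n c u v) := by
  delta Phi
  exact (contDiff_snd.mul ((hu.mul (pd_contDiff hv (drv n))).sub
    (hv.mul (pd_contDiff hu (drv n))))).add (contDiff_const.mul (hu.mul hv))

lemma Phi_support (c : ℝ) (hcu : HasCompactSupport u) (hcv : HasCompactSupport v) :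
    HasCompactSupport (Phi n c u v) := by
  delta Phi
  exact (HasCompactSupport.mul_left (hcs_sub hcu.mul_right hcv.mul_right)).add
    (HasCompactSupport.mul_left hcu.mul_right)

lemma G2_contDiff (hu : ContDiff ℝ (⊤ : ℕ∞) u) (hv : ContDiff ℝ (⊤ : ℕ∞) v) :
    ContDiff ℝ (⊤ : ℕ∞) (G2 n u v) := by
  delta G2
  have hS : ContDiff ℝ (⊤ : ℕ∞) (fun p : Dom n =>
      ∑ j : Fin n, (Xop n j (Wx n j u v) p + Yop n j (Wy n j u v) p)) :=
    ContDiff.sum fun j _ => (Xop_contDiff (Wx_contDiff j hu hv) j).add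
      (Yop_contDiff (Wy_contDiff j hu hv) j)
  exact ((contDiff_snd.div_const 2).mul hS).add
    ((contDiff_snd.pow 3).mul (pd_contDiff (Wt_contDiff hu hv) (dtv n)))

lemma G2_support (hcu : HasCompactSupport u) (hcv : HasCompactSupport v) :
    HasCompactSupport (G2 n u v) := by
  delta G2
  have hS : HasCompactSupport (fun p : Dom n =>
      ∑ j : Fin n, (Xop n j (Wx n j u v) p + Yop n j (Wy n j u v) p)) :=
    hcs_finsetSum _ _ fun j _ => (Xop_support (Wx_support j hcu hcv) j).add
      (Yop_support (Wy_support j hcu hcv) j)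
  exact (HasCompactSupport.mul_left hS).add
    (HasCompactSupport.mul_left (pd_support (Wt_support hcu hcv) (dtv n)))

lemma integral_G2_slice (hu : ContDiff ℝ (⊤ : ℕ∞) u) (hv : ContDiff ℝ (⊤ : ℕ∞) v)
    (hcu : HasCompactSupport u) (hcv : HasCompactSupport v) (r : ℝ) :
    ∫ w : Heis n, G2 n u v (w, r) = 0 := by
  have hiX : ∀ j : Fin n, Integrable (fun w : Heis n => Xop n j (Wx n j u v) (w, r)) :=
    fun j => slice_integrable (Xop_contDiff (Wx_contDiff j hu hv) j).continuous
      (Xop_support (Wx_support j hcu hcv) j) r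
  have hiY : ∀ j : Fin n, Integrable (fun w : Heis n => Yop n j (Wy n j u v) (w, r)) :=
    fun j => slice_integrable (Yop_contDiff (Wy_contDiff j hu hv) j).continuous
      (Yop_support (Wy_support j hcu hcv) j) r
  have hiS : Integrable (fun w : Heis n =>
      ∑ j : Fin n, (Xop n j (Wx n j u v) (w, r) + Yop n j (Wy n j u v) (w, r))) :=
    integrable_finset_sum _ fun j _ => (hiX j).add (hiY j)
  have hiT : Integrable (fun w : Heis n => pd (dtv n) (Wt n u v) (w, r)) :=
    slice_integrable (pd_contDiff (Wt_contDiff hu hv) _).continuous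
      (pd_support (Wt_support hcu hcv) _) r
  have e : (fun w : Heis n => G2 n u v (w, r))
      = fun w : Heis n => (r / 2) *
          (∑ j : Fin n, (Xop n j (Wx n j u v) (w, r) + Yop n j (Wy n j u v) (w, r)))
        + r ^ 3 * pd (dtv n) (Wt n u v) (w, r) := rfl
  rw [e, integral_add (hiS.const_mul _) (hiT.const_mul _), integral_const_mul,
    integral_const_mul]
  have hSint : (∫ w : Heis n,
        ∑ j : Fin n, (Xop n j (Wx n j u v) (w, r) + Yop n j (Wy n j u v) (w, r)))
      = ∑ j : Fin n, ∫ w : Heis n, (Xop n j (Wx n j u v) (w, r) + Yop n j (Wy n j u v) (w, r)) :=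
    integral_finset_sum _ fun j _ => (hiX j).add (hiY j)
  rw [hSint]
  have hz : ∀ j ∈ (Finset.univ : Finset (Fin n)),
      (∫ w : Heis n, (Xop n j (Wx n j u v) (w, r) + Yop n j (Wy n j u v) (w, r))) = 0 := by
    intro j _
    rw [integral_add (hiX j) (hiY j),
      integral_Xop_slice_zero j (Wx_contDiff j hu hv) (Wx_support j hcu hcv) r,
      integral_Yop_slice_zero j (Wy_contDiff j hu hv) (Wy_support j hcu hcv) r]
    norm_num
  rw [Finset.sum_congr rfl hz]
  have hT : ∫ w : Heis n, pd (dtv n) (Wt n u v) (w, r) = 0 := by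
    rw [show (dtv n) = (((0, 0, 1) : Heis n), (0 : ℝ)) from rfl]
    exact integral_pd0_slice_zero (Wt_contDiff hu hv) (Wt_support hcu hcv) (0, 0, 1) r
  rw [hT]
  simp

lemma tendsto_zero_hcs {g : ℝ → ℝ} (hg : HasCompactSupport g) :
    Filter.Tendsto g Filter.atTop (nhds 0) :=
  hg.is_zero_at_infty.mono_left (by rw [cocompact_eq_atBot_atTop]; exact le_sup_right)

theorem stmt18 (n : ℕ) (hn : 1 ≤ n) (a b : ℝ) (ha : 0 < a) (hb : 0 < b)
    (hab : a + b = 2 * n + 2)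
    (u₀ v₀ : Dom n → ℝ) (hu : ContDiff ℝ (⊤ : ℕ∞) u₀) (hv : ContDiff ℝ (⊤ : ℕ∞) v₀)
    (hcu : HasCompactSupport u₀) (hcv : HasCompactSupport v₀) :
    IntegrableOn
      (fun p : Dom n =>
        ((p.2 ^ a : ℝ) * u₀ p * ΔB n (fun q => (q.2 ^ b : ℝ) * v₀ q) p
          - (p.2 ^ b : ℝ) * v₀ p * ΔB n (fun q => (q.2 ^ a : ℝ) * u₀ q) p) *
          p.2 ^ (-2 * (n : ℝ) - 3))
      (Set.univ ×ˢ Set.Ioi (0 : ℝ)) volume ∧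
    ∫ p in (Set.univ ×ˢ Set.Ioi (0 : ℝ) : Set (Dom n)),
        ((p.2 ^ a : ℝ) * u₀ p * ΔB n (fun q => (q.2 ^ b : ℝ) * v₀ q) p
          - (p.2 ^ b : ℝ) * v₀ p * ΔB n (fun q => (q.2 ^ a : ℝ) * u₀ q) p) *
          p.2 ^ (-2 * (n : ℝ) - 3)
      = (a - b) * ∫ zt : Heis n, u₀ (zt, 0) * v₀ (zt, 0) := by
  set P : Dom n → ℝ := Phi n (b - a) u₀ v₀ with hPdef
  set G : Dom n → ℝ := fun p => pd (drv n) P p + G2 n u₀ v₀ p with hGdef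
  have hPc : ContDiff ℝ (⊤ : ℕ∞) P := Phi_contDiff _ hu hv
  have hPs : HasCompactSupport P := Phi_support _ hcu hcv
  have hG1c : Continuous (pd (drv n) P) := (pd_contDiff hPc (drv n)).continuous
  have hG1s : HasCompactSupport (pd (drv n) P) := pd_support hPs (drv n)
  have hG2c : Continuous (G2 n u₀ v₀) := (G2_contDiff hu hv).continuous
  have hG2s : HasCompactSupport (G2 n u₀ v₀) := G2_support hcu hcv
  have hG1int : Integrable (pd (drv n) P) :=
    hG1c.integrable_of_hasCompactSupport hG1s
  have hG2int : Integrable (G2 n u₀ v₀) :=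
    hG2c.integrable_of_hasCompactSupport hG2s
  have hGint : Integrable G := hG1int.add hG2int
  have hUmeas : MeasurableSet (Set.univ ×ˢ Set.Ioi (0 : ℝ) : Set (Dom n)) :=
    MeasurableSet.univ.prod measurableSet_Ioi
  have hEq : Set.EqOn
      (fun p : Dom n =>
        ((p.2 ^ a : ℝ) * u₀ p * ΔB n (fun q => (q.2 ^ b : ℝ) * v₀ q) p
          - (p.2 ^ b : ℝ) * v₀ p * ΔB n (fun q => (q.2 ^ a : ℝ) * u₀ q) p) *
          p.2 ^ (-2 * (n : ℝ) - 3)) G (Set.univ ×ˢ Set.Ioi (0 : ℝ)) := by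
    intro p hp
    exact key_pointwise a b hab hu hv hp.2
  have hrestrict : (volume : Measure (Dom n)).restrict (Set.univ ×ˢ Set.Ioi (0 : ℝ))
      = (volume : Measure (Heis n)).prod ((volume : Measure ℝ).restrict (Set.Ioi 0)) := by
    rw [MeasureTheory.Measure.volume_eq_prod, ← Measure.prod_restrict, Measure.restrict_univ]
  constructor
  · exact (hGint.integrableOn).congr_fun (fun p hp => (hEq hp).symm) hUmeas
  · rw [setIntegral_congr_fun hUmeas hEq]
    have hsplit : ∫ p in (Set.univ ×ˢ Set.Ioi (0 : ℝ) : Set (Dom n)), G p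
        = (∫ p in (Set.univ ×ˢ Set.Ioi (0 : ℝ) : Set (Dom n)), pd (drv n) P p)
          + ∫ p in (Set.univ ×ˢ Set.Ioi (0 : ℝ) : Set (Dom n)), G2 n u₀ v₀ p :=
      integral_add hG1int.integrableOn hG2int.integrableOn
    rw [hsplit]
    have h2 : ∫ p in (Set.univ ×ˢ Set.Ioi (0 : ℝ) : Set (Dom n)), G2 n u₀ v₀ p = 0 := by
      rw [hrestrict, integral_prod_symm _ (by rw [← hrestrict]; exact hG2int.integrableOn)]
      have e : (fun r : ℝ => ∫ w : Heis n, G2 n u₀ v₀ (w, r)) = fun _ => 0 :=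
        funext fun r => integral_G2_slice hu hv hcu hcv r
      rw [e]
      simp
    have h1 : ∫ p in (Set.univ ×ˢ Set.Ioi (0 : ℝ) : Set (Dom n)), pd (drv n) P p
        = (a - b) * ∫ zt : Heis n, u₀ (zt, 0) * v₀ (zt, 0) := by
      rw [hrestrict, integral_prod _ (by rw [← hrestrict]; exact hG1int.integrableOn)]
      have inner : ∀ w : Heis n,
          (∫ r in Set.Ioi (0 : ℝ), pd (drv n) P (w, r))
            = (a - b) * (u₀ (w, 0) * v₀ (w, 0)) := by
        intro w
        have hder : ∀ r ∈ Set.Ioi (0 : ℝ),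
            HasDerivAt (fun ρ : ℝ => P (w, ρ)) (pd (drv n) P (w, r)) r :=
          fun r _ => hasDerivAt_slice_snd (hPc.differentiable (by simp)) w r
        have hcont : ContinuousWithinAt (fun ρ : ℝ => P (w, ρ)) (Set.Ici 0) 0 :=
          (hPc.continuous.comp (Continuous.prodMk_right w)).continuousWithinAt
        have hint' : IntegrableOn (fun r : ℝ => pd (drv n) P (w, r)) (Set.Ioi 0) :=
          ((hG1c.comp (Continuous.prodMk_right w)).integrable_of_hasCompactSupport
            (slice_snd_support hG1s w)).integrableOn
        have htend : Filter.Tendsto (fun ρ : ℝ => P (w, ρ)) Filter.atTop (nhds 0) :=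
          tendsto_zero_hcs (slice_snd_support hPs w)
        rw [integral_Ioi_of_hasDerivAt_of_tendsto hcont hder hint' htend]
        have hP0 : P (w, 0) = (b - a) * (u₀ (w, 0) * v₀ (w, 0)) := by
          simp [hPdef, Phi]
        rw [hP0]
        ring
      rw [integral_congr_ae (Filter.Eventually.of_forall inner), integral_const_mul]
    rw [h1, h2, add_zero]

end
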